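/- Let γ > 0, λ > 0, ω > 4/γ², and let ψ be the antisymmetric stationary state: ψ(x) = −√(2ω/λ)·sech(√ω(x − x̄)) for x < 0 and ψ(x) = √(2ω/λ)·sech(√ω(x + x̄)) for x > 0, with x̄ = (1/(2√ω))·log((γ√ω + 2)/(γ√ω − 2)). Then: (i) ∫_ℝ ψ² dx = 4√ω/λ − 8/(γλ); (ii) E_{γδ'}(ψ) = 16/(3γ³λ) − (2/(3λ))ω^{3/2}; (iii) S_ω(ψ) := E_{γδ'}(ψ) + (ω/2)∫_ℝ ψ² dx = 16/(3γ³λ) − 4ω/(γλ) + (4/(3λ))ω^{3/2}. -/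

import Mathlib

/-!
On each half-line ψ is a translate of `A * sech (s * x)` with `A = √(2ω/λ)`, `s = √ω`, and
`ψ²`, `ψ⁴`, `ψ'²` are even functions of the form `g (tanh y) * sech y ^ 2` with
`y = s * (|x| + x̄)` and `g` a polynomial. The substitution `t = tanh y` turns each integral into
`∫ g` from `tanh (s * x̄)` to `1`, and `x̄` is exactly `artanh (2 / (γ s)) / s`, so everything
becomes a rational function of `s` once `tanh (s * x̄) = 2 / (γ s)` is plugged in.
-/

open MeasureTheory Real Filter Set Topology

noncomputable section

def sech (x : ℝ) : ℝ := 1 / Real.cosh x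

namespace Real

theorem tanh_eq_one_sub_two_div (x : ℝ) : tanh x = 1 - 2 / (exp (2 * x) + 1) := by
  have h2x : exp (2 * x) = exp x * exp x := by rw [two_mul, exp_add]
  rw [tanh_eq_sinh_div_cosh, sinh_eq, cosh_eq, h2x, exp_neg]
  field_simp
  ring

theorem tendsto_tanh_atTop : Tendsto tanh atTop (𝓝 1) := by
  have hden : Tendsto (fun x : ℝ => exp (2 * x) + 1) atTop atTop :=
    tendsto_atTop_add_const_right _ 1 (tendsto_exp_atTop.comp (tendsto_id.const_mul_atTop two_pos))
  rw [show tanh = fun x => 1 - 2 / (exp (2 * x) + 1) from funext tanh_eq_one_sub_two_div]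
  simpa [div_eq_mul_inv] using
    (tendsto_const_nhds (x := (1 : ℝ))).sub (hden.inv_tendsto_atTop.const_mul 2)

theorem hasDerivAt_tanh (x : ℝ) : HasDerivAt tanh (sech x ^ 2) x := by
  have hcosh := (cosh_pos x).ne'
  rw [show tanh = fun y => sinh y / cosh y from funext tanh_eq_sinh_div_cosh]
  refine ((hasDerivAt_sinh x).div (hasDerivAt_cosh x) hcosh).congr_deriv ?_
  rw [sech, div_pow, one_pow, ← cosh_sq_sub_sinh_sq x]
  ring

theorem tanh_half_log_div {a c : ℝ} (h : |a| < c) :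
    tanh (1 / 2 * log ((c + a) / (c - a))) = a / c := by
  have hc : 0 < c := (abs_nonneg a).trans_lt h
  have hac : a / c ∈ Ioo (-1 : ℝ) 1 := by
    rw [mem_Ioo, lt_div_iff₀ hc, div_lt_iff₀ hc]
    constructor <;> linarith [neg_abs_le a, le_abs_self a]
  have hratio : (c + a) / (c - a) = (1 + a / c) / (1 - a / c) := by
    field_simp
  rw [hratio, ← artanh_eq_half_log (Ioo_subset_Icc_self hac), tanh_artanh hac]

end Real

theorem sech_neg (x : ℝ) : sech (-x) = sech x := by
  rw [sech, sech, cosh_neg]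

theorem sech_sq (x : ℝ) : sech x ^ 2 = 1 - tanh x ^ 2 := by
  have hcosh := (cosh_pos x).ne'
  rw [sech, tanh_eq_sinh_div_cosh]
  field_simp
  linarith [cosh_sq_sub_sinh_sq x]

theorem hasDerivAt_sech (x : ℝ) : HasDerivAt sech (-(tanh x * sech x)) x := by
  have hcosh := (cosh_pos x).ne'
  have h := (hasDerivAt_cosh x).inv hcosh
  rw [show cosh⁻¹ = sech from funext fun y => (one_div _).symm] at h
  refine h.congr_deriv ?_
  rw [tanh_eq_sinh_div_cosh, sech]
  field_simp

theorem hasDerivAt_mul_add (s c x : ℝ) : HasDerivAt (fun y => s * (y + c)) s x :=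
  ((hasDerivAt_id x).add_const c).const_mul s |>.congr_deriv (mul_one s)

theorem hasDerivAt_sech_mul_add (s c x : ℝ) :
    HasDerivAt (fun y => sech (s * (y + c))) (-(tanh (s * (x + c)) * sech (s * (x + c))) * s) x :=
  (hasDerivAt_sech _).comp x (hasDerivAt_mul_add s c x)

section TanhSubstitution

variable {g G : ℝ → ℝ} {s : ℝ}

theorem integral_Ioi_comp_tanh_mul_sech_sq (hG : ∀ t, HasDerivAt G (g t) t)
    (hg : ∀ t ∈ Ioo (-1 : ℝ) 1, 0 ≤ g t) (hs : 0 < s) (c : ℝ) :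
    ∫ x in Ioi (0 : ℝ), g (tanh (s * (x + c))) * sech (s * (x + c)) ^ 2
      = (G 1 - G (tanh (s * c))) / s := by
  have hderiv : ∀ x ∈ Ici (0 : ℝ), HasDerivAt (fun y => G (tanh (s * (y + c))) / s)
      (g (tanh (s * (x + c))) * sech (s * (x + c)) ^ 2) x := by
    intro x _
    refine ((hG _).comp x ((hasDerivAt_tanh _).comp x (hasDerivAt_mul_add s c x))
      |>.div_const s).congr_deriv ?_
    simp only [Function.comp_apply]
    field_simp
  have hlim : Tendsto (fun y => G (tanh (s * (y + c))) / s) atTop (𝓝 (G 1 / s)) :=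
    ((hG 1).continuousAt.tendsto.comp (tendsto_tanh_atTop.comp
      ((tendsto_atTop_add_const_right _ c tendsto_id).const_mul_atTop hs))).div_const s
  have hnonneg : ∀ x ∈ Ioi (0 : ℝ), 0 ≤ g (tanh (s * (x + c))) * sech (s * (x + c)) ^ 2 :=
    fun x _ => mul_nonneg (hg _ ⟨neg_one_lt_tanh _, tanh_lt_one _⟩) (sq_nonneg _)
  rw [integral_Ioi_of_hasDerivAt_of_nonneg' hderiv hnonneg hlim, zero_add, sub_div]

theorem integral_comp_tanh_abs_mul_sech_sq (hG : ∀ t, HasDerivAt G (g t) t)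
    (hg : ∀ t ∈ Ioo (-1 : ℝ) 1, 0 ≤ g t) (hs : 0 < s) (c : ℝ) :
    ∫ x, g (tanh (s * (|x| + c))) * sech (s * (|x| + c)) ^ 2
      = 2 * (G 1 - G (tanh (s * c))) / s := by
  rw [integral_comp_abs (f := fun x => g (tanh (s * (x + c))) * sech (s * (x + c)) ^ 2),
    integral_Ioi_comp_tanh_mul_sech_sq hG hg hs c, mul_div_assoc]

end TanhSubstitution

def oddSechProfile (A s c x : ℝ) : ℝ :=
  if x < 0 then -(A * sech (s * (x - c))) else A * sech (s * (x + c))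

section oddSechProfile

variable {A s c : ℝ}

theorem oddSechProfile_sq (x : ℝ) :
    oddSechProfile A s c x ^ 2 = A ^ 2 * sech (s * (|x| + c)) ^ 2 := by
  rcases lt_or_ge x 0 with hx | hx
  · rw [oddSechProfile, if_pos hx, abs_of_neg hx, show s * (-x + c) = -(s * (x - c)) by ring,
      sech_neg]
    ring
  · rw [oddSechProfile, if_neg hx.not_gt, abs_of_nonneg hx]
    ring

theorem deriv_oddSechProfile_sq {x : ℝ} (hx : x ≠ 0) :
    deriv (oddSechProfile A s c) x ^ 2
      = A ^ 2 * s ^ 2 * tanh (s * (|x| + c)) ^ 2 * sech (s * (|x| + c)) ^ 2 := by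
  rcases hx.lt_or_gt with hx | hx
  · have hloc : oddSechProfile A s c =ᶠ[𝓝 x] fun y => -A * sech (s * (y + -c)) := by
      filter_upwards [Iio_mem_nhds hx] with y hy
      rw [oddSechProfile, if_pos (show y < 0 from hy), sub_eq_add_neg, neg_mul]
    rw [hloc.deriv_eq, ((hasDerivAt_sech_mul_add s (-c) x).const_mul (-A)).deriv, abs_of_neg hx,
      show s * (-x + c) = -(s * (x + -c)) by ring, tanh_neg, sech_neg]
    ring
  · have hloc : oddSechProfile A s c =ᶠ[𝓝 x] fun y => A * sech (s * (y + c)) := by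
      filter_upwards [Ioi_mem_nhds hx] with y hy
      rw [oddSechProfile, if_neg (show 0 < y from hy).not_gt]
    rw [hloc.deriv_eq, ((hasDerivAt_sech_mul_add s c x).const_mul A).deriv, abs_of_pos hx]
    ring

theorem integral_oddSechProfile_sq (hs : 0 < s) :
    ∫ x, oddSechProfile A s c x ^ 2 = 2 * A ^ 2 * (1 - tanh (s * c)) / s := by
  simp_rw [oddSechProfile_sq]
  rw [integral_comp_tanh_abs_mul_sech_sq (g := fun _ => A ^ 2) (G := fun t => A ^ 2 * t)
    (fun t => by simpa using (hasDerivAt_id t).const_mul (A ^ 2)) (fun _ _ => sq_nonneg A) hs c]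
  ring

theorem integral_oddSechProfile_pow_four (hs : 0 < s) :
    ∫ x, oddSechProfile A s c x ^ 4
      = 2 * A ^ 4 * (2 / 3 - tanh (s * c) + tanh (s * c) ^ 3 / 3) / s := by
  have hpoint : ∀ x, oddSechProfile A s c x ^ 4
      = A ^ 4 * (1 - tanh (s * (|x| + c)) ^ 2) * sech (s * (|x| + c)) ^ 2 := fun x => by
    rw [show oddSechProfile A s c x ^ 4 = (oddSechProfile A s c x ^ 2) ^ 2 by ring,
      oddSechProfile_sq, ← sech_sq]
    ring
  have hG : ∀ t : ℝ, HasDerivAt (fun t => A ^ 4 * (t - t ^ 3 / 3)) (A ^ 4 * (1 - t ^ 2)) t :=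
    fun t => ((hasDerivAt_id t).sub ((hasDerivAt_pow 3 t).div_const 3)).const_mul (A ^ 4)
      |>.congr_deriv (by simp)
  have hg : ∀ t ∈ Ioo (-1 : ℝ) 1, 0 ≤ A ^ 4 * (1 - t ^ 2) := fun t ht => by
    have : t ^ 2 < 1 := by nlinarith [ht.1, ht.2]
    positivity
  simp_rw [hpoint]
  rw [integral_comp_tanh_abs_mul_sech_sq hG hg hs c]
  ring

theorem integral_deriv_oddSechProfile_sq (hs : 0 < s) :
    ∫ x in ({0}ᶜ : Set ℝ), deriv (oddSechProfile A s c) x ^ 2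
      = 2 * A ^ 2 * s * (1 - tanh (s * c) ^ 3) / 3 := by
  have hG : ∀ t : ℝ,
      HasDerivAt (fun t => A ^ 2 * s ^ 2 * (t ^ 3 / 3)) (A ^ 2 * s ^ 2 * t ^ 2) t :=
    fun t => ((hasDerivAt_pow 3 t).div_const 3).const_mul (A ^ 2 * s ^ 2)
      |>.congr_deriv (by simp)
  rw [setIntegral_congr_fun (measurableSet_singleton 0).compl
      fun _ hx => deriv_oddSechProfile_sq hx,
    restrict_compl_singleton,
    integral_comp_tanh_abs_mul_sech_sq hG (fun t _ => by positivity) hs c]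
  field_simp

end oddSechProfile

/-- L²-norm, delta-prime energy and action of the antisymmetric stationary state of the
cubic NLS with a delta-prime interaction of strength γ, for ω > 4/γ². Here `f₁`, `f₂` are
the two branches of ψ, so ψ(0−) = f₁ 0 and ψ(0+) = f₂ 0. -/
theorem statement12 (γ lam ω : ℝ) (hγ : 0 < γ) (hlam : 0 < lam) (hω : 4 / γ ^ 2 < ω)
    (xbar : ℝ)
    (hxbar : xbar = (1 / (2 * Real.sqrt ω)) *
      Real.log ((γ * Real.sqrt ω + 2) / (γ * Real.sqrt ω - 2)))
    (f₁ f₂ ψ : ℝ → ℝ)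
    (hf₁ : ∀ x, f₁ x = -(Real.sqrt (2 * ω / lam) * sech (Real.sqrt ω * (x - xbar))))
    (hf₂ : ∀ x, f₂ x = Real.sqrt (2 * ω / lam) * sech (Real.sqrt ω * (x + xbar)))
    (hψ : ∀ x, ψ x = if x < 0 then f₁ x else f₂ x) :
    (∫ x : ℝ, (ψ x) ^ 2) = 4 * Real.sqrt ω / lam - 8 / (γ * lam) ∧
    (1 / 2) * (∫ x in ({(0:ℝ)}ᶜ : Set ℝ), (deriv ψ x) ^ 2)
        - (1 / (2 * γ)) * (f₂ 0 - f₁ 0) ^ 2 - (lam / 4) * (∫ x : ℝ, (ψ x) ^ 4)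
      = 16 / (3 * γ ^ 3 * lam) - (2 / (3 * lam)) * ω ^ ((3:ℝ)/2) ∧
    ((1 / 2) * (∫ x in ({(0:ℝ)}ᶜ : Set ℝ), (deriv ψ x) ^ 2)
        - (1 / (2 * γ)) * (f₂ 0 - f₁ 0) ^ 2 - (lam / 4) * (∫ x : ℝ, (ψ x) ^ 4))
        + (ω / 2) * (∫ x : ℝ, (ψ x) ^ 2)
      = 16 / (3 * γ ^ 3 * lam) - 4 * ω / (γ * lam) + (4 / (3 * lam)) * ω ^ ((3:ℝ)/2) := by
  have hω0 : 0 < ω := (by positivity : (0 : ℝ) < 4 / γ ^ 2).trans hω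
  set s := √ω with hs_def
  set A := √(2 * ω / lam)
  have hs : 0 < s := sqrt_pos.2 hω0
  have hγs : 2 < γ * s := by
    have : 2 / γ < s :=
      (lt_sqrt (by positivity)).2 (by rwa [div_pow, show (2 : ℝ) ^ 2 = 4 by norm_num])
    rwa [div_lt_iff₀' hγ] at this
  have hψ' : ψ = oddSechProfile A s xbar :=
    funext fun x => by rw [hψ, hf₁, hf₂, oddSechProfile]
  have htanh : tanh (s * xbar) = 2 / (γ * s) := by
    rw [hxbar, ← mul_assoc, show s * (1 / (2 * s)) = 1 / 2 by field_simp]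
    exact tanh_half_log_div (by rw [abs_two]; exact hγs)
  have hA : A ^ 2 = 2 * s ^ 2 / lam := by
    rw [sq_sqrt (by positivity), sq_sqrt hω0.le]
  have hjump : (f₂ 0 - f₁ 0) ^ 2 = 4 * A ^ 2 * (1 - tanh (s * xbar) ^ 2) := by
    rw [hf₁, hf₂, zero_sub, zero_add, mul_neg, sech_neg, ← sech_sq]
    ring
  have hω32 : ω ^ ((3 : ℝ) / 2) = s ^ 3 := by
    rw [hs_def, sqrt_eq_rpow, ← rpow_natCast, ← rpow_mul hω0.le]
    norm_num
  rw [hψ', integral_oddSechProfile_sq hs, integral_oddSechProfile_pow_four hs,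
    integral_deriv_oddSechProfile_sq hs, hjump, hω32, show ω = s ^ 2 from (sq_sqrt hω0.le).symm,
    show A ^ 4 = (A ^ 2) ^ 2 by ring, hA, htanh]
  refine ⟨?_, ?_, ?_⟩ <;> field_simp <;> ring
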